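/- Let s ∈ (0,1], p ∈ [1,∞) with sp < N, and set p*_s := Np/(N − sp). Suppose s̃, p̃ satisfy 0 ≤ s̃ < s, sp/(sp − (p−1)s̃) ≤ p̃ < Np/(N − (s − s̃)p), and p̃ ≠ p. Define q := p·p̃·(s − s̃)/(sp − s̃p̃). Then q ∈ [1, p*_s) and p̃ = spq/(sp + (q − p)s̃). -/

import Mathlib

/-! With `q := p p̃ (s - s̃) / (s p - s̃ p̃)`, both bounds on `q` are the bounds on `p̃` after
clearing the positive denominators: `1 ≤ q` is the lower bound on `p̃`, and `q < p*_s` is the upper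
bound multiplied by `s`. The denominator `s p - s̃ p̃` is positive: by the upper bound on `p̃` it suffices that
`s p (N - (s - s̃) p) - s̃ N p = p (s - s̃)(N - s p) > 0`. The formula for `p̃` is the algebraic
inverse of the definition of `q`, via `(s p + (q - p) s̃)(s p - s̃ p̃) = s p² (s - s̃)`. -/

/-- The critical exponent `p*_s`. -/
noncomputable def sobolevExponent (N s p : ℝ) : ℝ := N * p / (N - s * p)

/-- The exponent `q` of the interpolation curve through `(s̃, p̃)`. -/
noncomputable def endpointExponent (s p s' p' : ℝ) : ℝ := p * p' * (s - s') / (s * p - s' * p')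

lemma mul_lt_mul_of_lt_sobolevExponent {N s p s' p' : ℝ} (hp : 0 < p) (hs' : 0 ≤ s')
    (hss' : s' < s) (hsp : s * p < N) (h : p' < sobolevExponent N (s - s') p) :
    s' * p' < s * p := by
  have hd : 0 < N - (s - s') * p := by nlinarith
  have h' : p' * (N - (s - s') * p) < N * p := (lt_div_iff₀ hd).mp h
  have hgap : 0 < p * (s - s') * (N - s * p) := by
    have := sub_pos.mpr hss'; have := sub_pos.mpr hsp; positivity
  suffices s' * p' * (N - (s - s') * p) < s * p * (N - (s - s') * p) from
    lt_of_mul_lt_mul_right this hd.le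
  nlinarith [mul_le_mul_of_nonneg_left h'.le hs']

lemma one_le_endpointExponent {s p s' p' : ℝ} (hs : 0 < s) (hp : 1 ≤ p) (hss' : s' ≤ s)
    (hD : s' * p' < s * p) (h : s * p / (s * p - (p - 1) * s') ≤ p') :
    1 ≤ endpointExponent s p s' p' := by
  have hd : 0 < s * p - (p - 1) * s' := by
    nlinarith [mul_le_mul_of_nonneg_left hss' (by linarith : (0 : ℝ) ≤ p - 1)]
  rw [endpointExponent, le_div_iff₀ (by linarith)]
  nlinarith [(div_le_iff₀ hd).mp h]

lemma endpointExponent_lt_sobolevExponent {N s p s' p' : ℝ} (hs : 0 < s) (hp : 0 < p)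
    (hs' : 0 ≤ s') (hsp : s * p < N) (hD : s' * p' < s * p)
    (h : p' < sobolevExponent N (s - s') p) :
    endpointExponent s p s' p' < sobolevExponent N s p := by
  have hd : 0 < N - (s - s') * p := by nlinarith
  have h' : p' * (N - (s - s') * p) < N * p := (lt_div_iff₀ hd).mp h
  rw [endpointExponent, sobolevExponent, div_lt_div_iff₀ (by linarith) (by linarith)]
  nlinarith [mul_lt_mul_of_pos_left h' (mul_pos hs hp)]

/-- `p̃ = s p q / (s p + (q - p) s̃)` is the second coordinate of the interpolation curve
`γ_q(θ) = ((1 - θ) s, p q / (q - θ (q - p)))` at `θ = 1 - s̃ / s`. -/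
lemma eq_interpolation_of_eq_endpointExponent {s p s' p' q : ℝ}
    (hs : s ≠ 0) (hp : p ≠ 0) (hss' : s' ≠ s) (hD : s * p - s' * p' ≠ 0)
    (hq : q = endpointExponent s p s' p') :
    p' = s * p * q / (s * p + (q - p) * s') := by
  have hq' : q * (s * p - s' * p') = p * p' * (s - s') := by
    rw [hq, endpointExponent, div_mul_cancel₀ _ hD]
  have key : (s * p + (q - p) * s') * (s * p - s' * p') = s * p ^ 2 * (s - s') := by
    linear_combination s' * hq'
  have hden : s * p + (q - p) * s' ≠ 0 := by
    refine left_ne_zero_of_mul (a := s * p + (q - p) * s') (b := s * p - s' * p') ?_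
    rw [key]
    exact mul_ne_zero (mul_ne_zero hs (pow_ne_zero 2 hp)) (sub_ne_zero.mpr hss'.symm)
  rw [eq_div_iff hden]
  linear_combination -hq'

theorem curve_through_compact_point_general (N : ℕ)
    (s p : ℝ) (hs : s ∈ Set.Ioc (0 : ℝ) 1) (hp : 1 ≤ p) (hsp : s * p < N)
    (s' p' : ℝ) (hs' : s' ∈ Set.Ico (0 : ℝ) s)
    (hp'l : s * p / (s * p - (p - 1) * s') ≤ p')
    (hp'u : p' < N * p / (N - (s - s') * p))
    (q : ℝ) (hq : q = p * p' * (s - s') / (s * p - s' * p')) :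
    q ∈ Set.Ico (1 : ℝ) (N * p / (N - s * p)) ∧
      p' = s * p * q / (s * p + (q - p) * s') := by
  obtain ⟨hs0, -⟩ := hs
  obtain ⟨hs'0, hss'⟩ := hs'
  have hp0 : 0 < p := by linarith
  have hD : s' * p' < s * p := mul_lt_mul_of_lt_sobolevExponent hp0 hs'0 hss' hsp hp'u
  refine ⟨⟨?_, ?_⟩, ?_⟩
  · rw [hq]; exact one_le_endpointExponent hs0 hp hss'.le hD hp'l
  · rw [hq]; exact endpointExponent_lt_sobolevExponent hs0 hp0 hs'0 hsp hD hp'u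
  · exact eq_interpolation_of_eq_endpointExponent hs0.ne' hp0.ne' hss'.ne
      (sub_ne_zero.mpr hD.ne') hq

theorem curve_through_compact_point (N : ℕ) (hN : 1 ≤ N)
    (s p : ℝ) (hs : s ∈ Set.Ioc (0 : ℝ) 1) (hp : 1 ≤ p) (hsp : s * p < N)
    (s' p' : ℝ) (hs' : s' ∈ Set.Ico (0 : ℝ) s)
    (hp'l : s * p / (s * p - (p - 1) * s') ≤ p')
    (hp'u : p' < N * p / (N - (s - s') * p)) (hpne : p' ≠ p)
    (q : ℝ) (hq : q = p * p' * (s - s') / (s * p - s' * p')) :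
    q ∈ Set.Ico (1 : ℝ) (N * p / (N - s * p)) ∧
      p' = s * p * q / (s * p + (q - p) * s') :=
  curve_through_compact_point_general N s p hs hp hsp s' p' hs' hp'l hp'u q hq
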